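/- Let m ≥ 1, p₁,…,p_m ∈ (0,1), U = Σᵢ Bᵢ with Bᵢ ~ Bernoulli(pᵢ) independent, and let T be a nonnegative random variable independent of U. Then E[ (T/(T+U)) 1{T>0} ] ≤ exp(-E[U]) + 12 E[T]/E[U]. -/

import Mathlib

open MeasureTheory ProbabilityTheory

set_option maxHeartbeats 1000000

/-- CR20 Lemma 40: for U a sum of independent Bernoulli(pᵢ)
variables and T ≥ 0 independent of U,
E[(T/(T+U)) 1{T>0}] ≤ exp(-E U) + 12 E T / E U. -/
theorem fdr_ratio_bound {Ω : Type*} [MeasureSpace Ω]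
    [IsProbabilityMeasure (ℙ : Measure Ω)]
    (n : ℕ) (hn : 1 ≤ n) (p : Fin n → ℝ) (hp : ∀ i, p i ∈ Set.Ioo (0 : ℝ) 1)
    (B : Fin n → Ω → ℝ) (hmeas : ∀ i, Measurable (B i))
    (hval : ∀ i, ∀ ω, B i ω = 0 ∨ B i ω = 1)
    (hprob : ∀ i, (ℙ {ω | B i ω = 1}).toReal = p i)
    (hindep : iIndepFun B ℙ)
    (U : Ω → ℝ) (hU : ∀ ω, U ω = ∑ i, B i ω)
    (T : Ω → ℝ) (hT : Measurable T) (hTnn : ∀ ω, 0 ≤ T ω)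
    (hTint : Integrable T ℙ)
    (hTU : IndepFun T U ℙ) :
    ∫ ω, (if 0 < T ω then T ω / (T ω + U ω) else 0) ∂ℙ ≤
      Real.exp (-∫ ω, U ω ∂ℙ) + 12 * (∫ ω, T ω ∂ℙ) / (∫ ω, U ω ∂ℙ) := by
  classical
  haveI : Nonempty (Fin n) := ⟨⟨0, hn⟩⟩
  -- basic facts about B
  have hBnn : ∀ i ω, 0 ≤ B i ω := fun i ω => by rcases hval i ω with h | h <;> simp [h]
  have hBle : ∀ i ω, B i ω ≤ 1 := fun i ω => by rcases hval i ω with h | h <;> simp [h]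
  have hUmeas : Measurable U := by
    have : U = fun ω => ∑ i, B i ω := funext hU
    rw [this]; exact Finset.measurable_sum _ fun i _ => hmeas i
  have hUnn : ∀ ω, 0 ≤ U ω := fun ω => by
    rw [hU]; exact Finset.sum_nonneg fun i _ => hBnn i ω
  have hUle : ∀ ω, U ω ≤ n := fun ω => by
    rw [hU]
    calc ∑ i, B i ω ≤ ∑ _i : Fin n, (1 : ℝ) := Finset.sum_le_sum fun i _ => hBle i ω
    _ = n := by simp
  have hBint : ∀ i, Integrable (B i) ℙ := fun i =>
    Integrable.mono' (integrable_const 1) (hmeas i).aestronglyMeasurable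
      (Filter.Eventually.of_forall fun ω => by
        rw [Real.norm_eq_abs, abs_le]; exact ⟨by linarith [hBnn i ω], hBle i ω⟩)
  have hAmeas : ∀ i, MeasurableSet {ω | B i ω = 1} :=
    fun i => measurableSet_eq_fun (hmeas i) measurable_const
  have hBeq : ∀ i, B i = Set.indicator {ω | B i ω = 1} (fun _ => (1 : ℝ)) := by
    intro i; funext ω
    rcases hval i ω with h | h <;> simp [Set.indicator_apply, Set.mem_setOf_eq, h]
  have hEB : ∀ i, ∫ ω, B i ω ∂ℙ = p i := by
    intro i
    calc ∫ ω, B i ω ∂ℙ = ∫ ω, Set.indicator {ω | B i ω = 1} (fun _ => (1 : ℝ)) ω ∂ℙ := by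
          rw [← hBeq i]
    _ = (ℙ {ω | B i ω = 1}).toReal • (1 : ℝ) := integral_indicator_const 1 (hAmeas i)
    _ = p i := by rw [smul_eq_mul, mul_one, hprob i]
  set m : ℝ := ∑ i, p i with hm_def
  have hIU : ∫ ω, U ω ∂ℙ = m := by
    have : U = fun ω => ∑ i, B i ω := funext hU
    rw [this, integral_finset_sum Finset.univ fun i _ => hBint i]
    simp [hEB, hm_def]
  have hmpos : 0 < m :=
    Finset.sum_pos (fun i _ => (hp i).1) Finset.univ_nonempty
  have hETnn : 0 ≤ ∫ ω, T ω ∂ℙ := integral_nonneg hTnn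
  -- probability that U = 0
  have hU0set : {ω | U ω = 0} = ⋂ i, B i ⁻¹' {0} := by
    ext ω
    simp only [Set.mem_setOf_eq, Set.mem_iInter, Set.mem_preimage, Set.mem_singleton_iff, hU ω]
    rw [Finset.sum_eq_zero_iff_of_nonneg fun i _ => hBnn i ω]
    simp
  have hP0 : ℙ {ω | U ω = 0} = ∏ i, ℙ (B i ⁻¹' {0}) := by
    rw [hU0set]
    exact hindep.meas_iInter fun i => ⟨{0}, measurableSet_singleton 0, rfl⟩
  have hPB0 : ∀ i, (ℙ (B i ⁻¹' {0})).toReal = 1 - p i := by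
    intro i
    have hcompl : B i ⁻¹' {0} = {ω | B i ω = 1}ᶜ := by
      ext ω
      simp only [Set.mem_preimage, Set.mem_singleton_iff, Set.mem_compl_iff, Set.mem_setOf_eq]
      rcases hval i ω with h | h <;> simp [h]
    rw [hcompl, measure_compl (hAmeas i) (measure_ne_top _ _), measure_univ,
      ENNReal.toReal_sub_of_le prob_le_one ENNReal.one_ne_top]
    simp [hprob i]
  have hP0le : (ℙ {ω | U ω = 0}).toReal ≤ Real.exp (-m) := by
    rw [hP0, ENNReal.toReal_prod]
    calc ∏ i, (ℙ (B i ⁻¹' {0})).toReal = ∏ i, (1 - p i) := by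
          exact Finset.prod_congr rfl fun i _ => hPB0 i
    _ ≤ ∏ i, Real.exp (-p i) := by
          apply Finset.prod_le_prod
          · exact fun i _ => by linarith [(hp i).2]
          · exact fun i _ => by linarith [Real.add_one_le_exp (-p i)]
    _ = Real.exp (-m) := by rw [← Real.exp_sum]; simp [hm_def]
  -- variance bound
  have hB2 : ∀ i, MemLp (B i) 2 ℙ := fun i =>
    memLp_of_bounded (Filter.Eventually.of_forall fun ω => ⟨hBnn i ω, hBle i ω⟩)
      (hmeas i).aestronglyMeasurable 2
  have hBsq : ∀ i, (B i) ^ 2 = B i := by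
    intro i; funext ω
    rcases hval i ω with h | h <;> simp [Pi.pow_apply, h]
  have hVarB : ∀ i, variance (B i) ℙ ≤ p i := by
    intro i
    rw [variance_eq_sub (hB2 i), hBsq i]
    have := hEB i
    simp only [this]
    nlinarith [sq_nonneg (p i), (hp i).1]
  have hUsum : U = ∑ i, B i := by
    funext ω; rw [hU]; simp [Finset.sum_apply]
  have hVarU : variance U ℙ ≤ m := by
    rw [hUsum, IndepFun.variance_sum (fun i _ => hB2 i)
      (fun i _ j _ hij => hindep.indepFun hij)]
    exact Finset.sum_le_sum fun i _ => hVarB i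
  have hUmem2 : MemLp U 2 ℙ :=
    memLp_of_bounded (Filter.Eventually.of_forall fun ω => ⟨hUnn ω, hUle ω⟩)
      hUmeas.aestronglyMeasurable 2
  have hVarInt : ∫ ω, (U ω - m) ^ 2 ∂ℙ = variance U ℙ := by
    rw [variance_eq_integral hUmeas.aemeasurable]
    congr 1
    funext ω
    simp [Pi.pow_apply, Pi.sub_apply, hIU]
  have hVarIntNN : 0 ≤ ∫ ω, (U ω - m) ^ 2 ∂ℙ := integral_nonneg fun ω => sq_nonneg _
  -- the three dominating functions
  set c : ℝ := 2 / m with hc_def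
  have hcpos : 0 < c := by positivity
  have hcm : c * m = 2 := div_mul_cancel₀ 2 hmpos.ne'
  set g₁ : Ω → ℝ := Set.indicator {ω | U ω = 0} (fun _ => (1 : ℝ)) with hg₁_def
  set φ : ℝ → ℝ := fun u => c ^ 2 * (u - m) ^ 2 with hφ_def
  set g₂ : Ω → ℝ := T * (φ ∘ U) with hg₂_def
  set g₃ : Ω → ℝ := fun ω => T ω * c with hg₃_def
  have hU0meas : MeasurableSet {ω | U ω = 0} :=
    measurableSet_eq_fun hUmeas measurable_const
  -- pointwise bound
  have hU1 : ∀ ω, U ω ≠ 0 → 1 ≤ U ω := by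
    intro ω hne
    have : ∃ i, B i ω ≠ 0 := by
      by_contra h
      push_neg at h
      exact hne (by rw [hU]; exact Finset.sum_eq_zero fun i _ => h i)
    obtain ⟨i, hi⟩ := this
    have hBi : B i ω = 1 := (hval i ω).resolve_left hi
    calc (1 : ℝ) = B i ω := hBi.symm
    _ ≤ ∑ j, B j ω := Finset.single_le_sum (fun j _ => hBnn j ω) (Finset.mem_univ i)
    _ = U ω := (hU ω).symm
  have key : ∀ ω, (if 0 < T ω then T ω / (T ω + U ω) else 0) ≤ g₁ ω + g₂ ω + g₃ ω := by
    intro ω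
    have hg₁nn : 0 ≤ g₁ ω := Set.indicator_nonneg (fun _ _ => zero_le_one) ω
    have hg₂nn : 0 ≤ g₂ ω := by
      simp only [hg₂_def, Pi.mul_apply, Function.comp_apply, hφ_def]
      exact mul_nonneg (hTnn ω) (by positivity)
    have hg₃nn : 0 ≤ g₃ ω := mul_nonneg (hTnn ω) hcpos.le
    by_cases hTpos : 0 < T ω
    · rw [if_pos hTpos]
      by_cases hU0 : U ω = 0
      · have hg₁1 : g₁ ω = 1 := by
          simp [hg₁_def, Set.indicator_apply, Set.mem_setOf_eq, hU0]
        rw [hU0, add_zero, div_self hTpos.ne']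
        linarith
      · have hU1' := hU1 ω hU0
        have hUpos : 0 < U ω := by linarith
        have hstep : T ω / (T ω + U ω) ≤ T ω / U ω :=
          div_le_div_of_nonneg_left (hTnn ω) hUpos (by linarith)
        by_cases hhalf : m / 2 ≤ U ω
        · have h1 : 1 ≤ c * U ω := by
            have : c * (m / 2) ≤ c * U ω := mul_le_mul_of_nonneg_left hhalf hcpos.le
            nlinarith [hcm]
          have : T ω / U ω ≤ g₃ ω := by
            show T ω / U ω ≤ T ω * c
            rw [div_le_iff₀ hUpos]
            nlinarith [mul_le_mul_of_nonneg_left h1 (hTnn ω)]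
          linarith
        · push_neg at hhalf
          have hTU' : T ω / U ω ≤ T ω := div_le_self (hTnn ω) hU1'
          have h1 : 1 ≤ c * (m - U ω) := by
            have h2 : c * (m / 2) ≤ c * (m - U ω) :=
              mul_le_mul_of_nonneg_left (by linarith) hcpos.le
            nlinarith [hcm]
          have hg₂ : T ω ≤ g₂ ω := by
            simp only [hg₂_def, Pi.mul_apply, Function.comp_apply, hφ_def]
            nlinarith [hTnn ω, h1, mul_le_mul_of_nonneg_left
              (mul_self_le_mul_self (by norm_num : (0:ℝ) ≤ 1) h1) (hTnn ω)]
          linarith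
    · rw [if_neg hTpos]
      linarith
  -- measurability / integrability
  have hfmeas : Measurable fun ω => (if 0 < T ω then T ω / (T ω + U ω) else 0) :=
    Measurable.ite (measurableSet_lt measurable_const hT) (hT.div (hT.add hUmeas))
      measurable_const
  have hfint : Integrable (fun ω => (if 0 < T ω then T ω / (T ω + U ω) else 0)) ℙ := by
    apply Integrable.mono' (integrable_const (1 : ℝ)) hfmeas.aestronglyMeasurable
    apply Filter.Eventually.of_forall
    intro ω
    rw [Real.norm_eq_abs, abs_le]
    by_cases hTpos : 0 < T ω
    · rw [if_pos hTpos]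
      constructor
      · have : 0 ≤ T ω / (T ω + U ω) := div_nonneg (hTnn ω) (by linarith [hUnn ω])
        linarith
      · exact div_le_one_of_le₀ (by linarith [hUnn ω]) (by linarith [hUnn ω])
    · rw [if_neg hTpos]; norm_num
  have hg₁int : Integrable g₁ ℙ := (integrable_const (1 : ℝ)).indicator hU0meas
  have hφU : ∀ ω, φ (U ω) ≤ c ^ 2 * (n + m) ^ 2 := by
    intro ω
    simp only [hφ_def]
    have hn0 : (0 : ℝ) ≤ n := Nat.cast_nonneg n
    have h1 : |U ω - m| ≤ n + m := by
      rw [abs_le]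
      constructor
      · linarith [hUnn ω, hmpos]
      · linarith [hUle ω, hmpos]
    nlinarith [sq_nonneg c, abs_nonneg (U ω - m), sq_abs (U ω - m),
      mul_self_le_mul_self (abs_nonneg (U ω - m)) h1]
  have hφUnn : ∀ ω, 0 ≤ φ (U ω) := fun ω => by simp only [hφ_def]; positivity
  have hφmeas : Measurable φ := by
    simp only [hφ_def]
    fun_prop
  have hφUint : Integrable (φ ∘ U) ℙ :=
    Integrable.mono' (integrable_const (c ^ 2 * (n + m) ^ 2))
      (hφmeas.comp hUmeas).aestronglyMeasurable
      (Filter.Eventually.of_forall fun ω => by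
        rw [Function.comp_apply, Real.norm_eq_abs, abs_of_nonneg (hφUnn ω)]
        exact hφU ω)
  have hg₂int : Integrable g₂ ℙ := by
    apply Integrable.mono' (hTint.const_mul (c ^ 2 * (n + m) ^ 2))
      ((hT.mul (hφmeas.comp hUmeas)).aestronglyMeasurable)
    apply Filter.Eventually.of_forall
    intro ω
    simp only [hg₂_def, Pi.mul_apply, Function.comp_apply]
    rw [Real.norm_eq_abs, abs_of_nonneg (mul_nonneg (hTnn ω) (hφUnn ω))]
    nlinarith [mul_le_mul_of_nonneg_left (hφU ω) (hTnn ω)]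
  have hg₃int : Integrable g₃ ℙ := hTint.mul_const c
  -- integral computations
  have hIg₁ : ∫ ω, g₁ ω ∂ℙ ≤ Real.exp (-m) := by
    rw [hg₁_def, integral_indicator_const (1 : ℝ) hU0meas, smul_eq_mul, mul_one]
    exact hP0le
  have hIg₂ : ∫ ω, g₂ ω ∂ℙ = (∫ ω, T ω ∂ℙ) * ∫ ω, φ (U ω) ∂ℙ := by
    rw [hg₂_def]
    exact (hTU.comp measurable_id hφmeas).integral_mul_eq_mul_integral hT.aestronglyMeasurable hφUint.aestronglyMeasurable
  have hIφ : ∫ ω, φ (U ω) ∂ℙ ≤ c ^ 2 * m := by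
    calc ∫ ω, φ (U ω) ∂ℙ = c ^ 2 * ∫ ω, (U ω - m) ^ 2 ∂ℙ := by
          simp only [hφ_def]
          rw [integral_const_mul]
    _ ≤ c ^ 2 * m := by
          rw [hVarInt]
          exact mul_le_mul_of_nonneg_left hVarU (sq_nonneg c)
  have hIφnn : 0 ≤ ∫ ω, φ (U ω) ∂ℙ := integral_nonneg hφUnn
  have hIg₃ : ∫ ω, g₃ ω ∂ℙ = (∫ ω, T ω ∂ℙ) * c := by
    simp only [hg₃_def]
    exact integral_mul_const c T
  -- put it together
  set ET : ℝ := ∫ ω, T ω ∂ℙ with hET_def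
  have main : ∫ ω, (if 0 < T ω then T ω / (T ω + U ω) else 0) ∂ℙ ≤
      (∫ ω, g₁ ω ∂ℙ) + (∫ ω, g₂ ω ∂ℙ) + (∫ ω, g₃ ω ∂ℙ) := by
    have h12 : Integrable (fun ω => g₁ ω + g₂ ω) ℙ := hg₁int.add hg₂int
    have h123 : Integrable (fun ω => g₁ ω + g₂ ω + g₃ ω) ℙ := h12.add hg₃int
    calc ∫ ω, (if 0 < T ω then T ω / (T ω + U ω) else 0) ∂ℙ
        ≤ ∫ ω, (g₁ ω + g₂ ω + g₃ ω) ∂ℙ := integral_mono hfint h123 key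
    _ = (∫ ω, g₁ ω ∂ℙ) + (∫ ω, g₂ ω ∂ℙ) + (∫ ω, g₃ ω ∂ℙ) := by
        rw [integral_add h12 hg₃int, integral_add hg₁int hg₂int]
  rw [hIU]
  have hfinal : (∫ ω, g₁ ω ∂ℙ) + (∫ ω, g₂ ω ∂ℙ) + (∫ ω, g₃ ω ∂ℙ) ≤
      Real.exp (-m) + 12 * ET / m := by
    have h2 : ∫ ω, g₂ ω ∂ℙ ≤ ET * (c ^ 2 * m) := by
      rw [hIg₂]
      exact mul_le_mul_of_nonneg_left hIφ hETnn
    have hc2m : c ^ 2 * m = 4 / m := by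
      rw [hc_def]; field_simp; ring
    have h6 : ET * (c ^ 2 * m) + ET * c ≤ 12 * ET / m := by
      rw [hc2m, hc_def]
      calc ET * (4 / m) + ET * (2 / m) = 6 * ET / m := by field_simp; ring
      _ ≤ 12 * ET / m := by
          rw [div_le_div_iff₀ hmpos hmpos]
          nlinarith [hETnn, hmpos]
    calc (∫ ω, g₁ ω ∂ℙ) + (∫ ω, g₂ ω ∂ℙ) + (∫ ω, g₃ ω ∂ℙ)
        ≤ Real.exp (-m) + ET * (c ^ 2 * m) + ET * c := by
          rw [hIg₃]
          exact add_le_add (add_le_add hIg₁ h2) le_rfl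
    _ ≤ Real.exp (-m) + 12 * ET / m := by linarith
  linarith [main, hfinal]
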